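/- Homological perturbation lemma: Let (C, d_C) and (D, d_D) be chain complexes with chain maps i: C → D, p: D → C and homotopy h: D → D satisfying id_D − ip = d_D h + h d_D. Let B: D → D be a perturbation, i.e. (d_D + B)² = 0, which is small, i.e. id_D + Bh is invertible. Set A = (id + Bh)^{−1}B. Then with d̂_C = d_C + pAi, I = i − hAi, P = p − pAh, H = h − hAh, one has d̂_C² = 0, I and P are chain maps between (C, d̂_C) and (D, d_D + B), and id_D − IP = (d_D + B)H + H(d_D + B). -/
import Mathlib


/-- **Homological perturbation lemma.**
Let `(C, d_C)` and `(D, d_D)` be chain complexes with chain maps `i : C → D`,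
`p : D → C` and a homotopy `h : D → D` satisfying `id_D − ip = d_D h + h d_D`.
Let `B` be a perturbation, i.e. `(d_D + B)² = 0`, which is small, i.e.
`id_D + Bh` is invertible (with inverse `u`).  Set `A = (id + Bh)⁻¹ B`.
Then with `d̂_C = d_C + pAi`, `I = i − hAi`, `P = p − pAh`, `H = h − hAh`
one has `d̂_C² = 0`, `I` and `P` are chain maps between `(C, d̂_C)` and
`(D, d_D + B)`, and `id_D − IP = (d_D + B)H + H(d_D + B)`. -/
theorem homological_perturbation_lemma
    (R : Type*) [CommRing R]
    (C D : Type*) [AddCommGroup C] [Module R C] [AddCommGroup D] [Module R D]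
    (dC : C →ₗ[R] C) (dD : D →ₗ[R] D)
    (hdC : dC ∘ₗ dC = 0) (hdD : dD ∘ₗ dD = 0)
    (i : C →ₗ[R] D) (p : D →ₗ[R] C) (h : D →ₗ[R] D)
    -- chain maps and homotopy
    (hi : dD ∘ₗ i = i ∘ₗ dC) (hp : dC ∘ₗ p = p ∘ₗ dD)
    (hh : LinearMap.id - i ∘ₗ p = dD ∘ₗ h + h ∘ₗ dD)
    -- a small perturbation `B`
    (B : D →ₗ[R] D)
    (hB : (dD + B) ∘ₗ (dD + B) = 0)
    (u : D →ₗ[R] D)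
    (hu₁ : u ∘ₗ (LinearMap.id + B ∘ₗ h) = LinearMap.id)
    (hu₂ : (LinearMap.id + B ∘ₗ h) ∘ₗ u = LinearMap.id) :
    -- with `A = (id + Bh)⁻¹ B` and the perturbed data:
    ∀ (A : D →ₗ[R] D) (dC' : C →ₗ[R] C) (I : C →ₗ[R] D)
      (P : D →ₗ[R] C) (H : D →ₗ[R] D),
      A = u ∘ₗ B →
      dC' = dC + p ∘ₗ A ∘ₗ i →
      I = i - h ∘ₗ A ∘ₗ i →
      P = p - p ∘ₗ A ∘ₗ h →
      H = h - h ∘ₗ A ∘ₗ h →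
      -- `d̂_C` squares to zero
      (dC' ∘ₗ dC' = 0)
      -- `I` and `P` are chain maps for the perturbed differentials
      ∧ ((dD + B) ∘ₗ I = I ∘ₗ dC')
      ∧ (dC' ∘ₗ P = P ∘ₗ (dD + B))
      -- and `H` is a homotopy between `id_D` and `IP`
      ∧ (LinearMap.id - I ∘ₗ P = (dD + B) ∘ₗ H + H ∘ₗ (dD + B)) := by
  intro A dC' I P H hA hdC' hI hP hH
  subst hdC' hI hP hH
  -- (id + Bh)u = id, expanded
  have huB : u + u ∘ₗ (B ∘ₗ h) = LinearMap.id := by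
    simpa [LinearMap.comp_add, LinearMap.comp_id] using hu₁
  have hBu : u + B ∘ₗ (h ∘ₗ u) = LinearMap.id := by
    simpa [LinearMap.add_comp, LinearMap.id_comp, LinearMap.comp_assoc] using hu₂
  -- F1 : A h = id - u
  have F1 : A ∘ₗ h = LinearMap.id - u := by
    rw [hA, LinearMap.comp_assoc, eq_sub_iff_add_eq, add_comm]
    exact huB
  have F1' : B ∘ₗ (h ∘ₗ u) = LinearMap.id - u := by
    rw [eq_sub_iff_add_eq, add_comm]; exact hBu
  -- F2 : B h A = B - A
  have F2 : B ∘ₗ (h ∘ₗ A) = B - A := by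
    rw [hA]
    calc B ∘ₗ (h ∘ₗ (u ∘ₗ B)) = (B ∘ₗ (h ∘ₗ u)) ∘ₗ B := by
          simp only [LinearMap.comp_assoc]
      _ = (LinearMap.id - u) ∘ₗ B := by rw [F1']
      _ = B - u ∘ₗ B := by rw [LinearMap.sub_comp, LinearMap.id_comp]
  -- F3 : A h B = B - A
  have F3 : A ∘ₗ (h ∘ₗ B) = B - A := by
    calc A ∘ₗ (h ∘ₗ B) = (A ∘ₗ h) ∘ₗ B := by simp only [LinearMap.comp_assoc]
      _ = (LinearMap.id - u) ∘ₗ B := by rw [F1]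
      _ = B - u ∘ₗ B := by rw [LinearMap.sub_comp, LinearMap.id_comp]
      _ = B - A := by rw [← hA]
  -- perturbation relation
  have hB' : dD ∘ₗ B + B ∘ₗ dD + B ∘ₗ B = 0 := by
    have e := hB
    simp only [LinearMap.add_comp, LinearMap.comp_add, hdD] at e
    rw [show dD ∘ₗ B + B ∘ₗ dD + B ∘ₗ B
        = 0 + B ∘ₗ dD + (dD ∘ₗ B + B ∘ₗ B) from by abel]
    exact e
  have FBd : B ∘ₗ dD = -(dD ∘ₗ B) - B ∘ₗ B := by
    have e := hB'
    rw [show dD ∘ₗ B + B ∘ₗ dD + B ∘ₗ B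
        = B ∘ₗ dD - (-(dD ∘ₗ B) - B ∘ₗ B) from by abel, sub_eq_zero] at e
    exact e
  -- the key identity:  A A = A dD h A + A h dD A - dD A - A dD
  have e1 : A ∘ₗ (h ∘ₗ (dD ∘ₗ A)) = dD ∘ₗ A - u ∘ₗ (dD ∘ₗ A) := by
    calc A ∘ₗ (h ∘ₗ (dD ∘ₗ A)) = (A ∘ₗ h) ∘ₗ (dD ∘ₗ A) := by
          simp only [LinearMap.comp_assoc]
      _ = (LinearMap.id - u) ∘ₗ (dD ∘ₗ A) := by rw [F1]
      _ = dD ∘ₗ A - u ∘ₗ (dD ∘ₗ A) := by rw [LinearMap.sub_comp, LinearMap.id_comp]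
  have e2 : A ∘ₗ dD = -(u ∘ₗ (dD ∘ₗ B)) - A ∘ₗ B := by
    calc A ∘ₗ dD = u ∘ₗ (B ∘ₗ dD) := by rw [hA, LinearMap.comp_assoc]
      _ = u ∘ₗ (-(dD ∘ₗ B) - B ∘ₗ B) := by rw [FBd]
      _ = -(u ∘ₗ (dD ∘ₗ B)) - u ∘ₗ (B ∘ₗ B) := by
          rw [LinearMap.comp_sub, LinearMap.comp_neg]
      _ = -(u ∘ₗ (dD ∘ₗ B)) - A ∘ₗ B := by rw [hA, LinearMap.comp_assoc]
  have e3 : A ∘ₗ (dD ∘ₗ (h ∘ₗ A))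
      = -(u ∘ₗ (dD ∘ₗ B)) + u ∘ₗ (dD ∘ₗ A) - A ∘ₗ B + A ∘ₗ A := by
    calc A ∘ₗ (dD ∘ₗ (h ∘ₗ A)) = (A ∘ₗ dD) ∘ₗ (h ∘ₗ A) := by
          simp only [LinearMap.comp_assoc]
      _ = (-(u ∘ₗ (dD ∘ₗ B)) - A ∘ₗ B) ∘ₗ (h ∘ₗ A) := by rw [e2]
      _ = -(u ∘ₗ (dD ∘ₗ (B ∘ₗ (h ∘ₗ A)))) - A ∘ₗ (B ∘ₗ (h ∘ₗ A)) := by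
          simp only [LinearMap.sub_comp, LinearMap.neg_comp, LinearMap.comp_assoc]
      _ = -(u ∘ₗ (dD ∘ₗ (B - A))) - A ∘ₗ (B - A) := by rw [F2]
      _ = -(u ∘ₗ (dD ∘ₗ B)) + u ∘ₗ (dD ∘ₗ A) - A ∘ₗ B + A ∘ₗ A := by
          simp only [LinearMap.comp_sub]; abel
  have hAA : A ∘ₗ A
      = A ∘ₗ (dD ∘ₗ (h ∘ₗ A)) + A ∘ₗ (h ∘ₗ (dD ∘ₗ A)) - dD ∘ₗ A - A ∘ₗ dD := by
    rw [e1, e2, e3]; abel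
  -- trailing-composition versions of the rewrite rules
  have a0 : i ∘ₗ dC = dD ∘ₗ i := hi.symm
  have rc0 : i ∘ₗ p = LinearMap.id - dD ∘ₗ h - h ∘ₗ dD := by
    rw [eq_sub_iff_add_eq, eq_sub_iff_add_eq, ← eq_sub_iff_add_eq']
    rw [sub_eq_iff_eq_add'] at hh
    rw [hh]; abel
  have rbC : ∀ x : C →ₗ[R] D, dC ∘ₗ (p ∘ₗ x) = p ∘ₗ (dD ∘ₗ x) := by
    intro x
    calc dC ∘ₗ (p ∘ₗ x) = (dC ∘ₗ p) ∘ₗ x := by simp only [LinearMap.comp_assoc]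
      _ = p ∘ₗ (dD ∘ₗ x) := by rw [hp]; simp only [LinearMap.comp_assoc]
  have rbD : ∀ x : D →ₗ[R] D, dC ∘ₗ (p ∘ₗ x) = p ∘ₗ (dD ∘ₗ x) := by
    intro x
    calc dC ∘ₗ (p ∘ₗ x) = (dC ∘ₗ p) ∘ₗ x := by simp only [LinearMap.comp_assoc]
      _ = p ∘ₗ (dD ∘ₗ x) := by rw [hp]; simp only [LinearMap.comp_assoc]
  have rcC : ∀ x : C →ₗ[R] D,
      i ∘ₗ (p ∘ₗ x) = x - dD ∘ₗ (h ∘ₗ x) - h ∘ₗ (dD ∘ₗ x) := by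
    intro x
    calc i ∘ₗ (p ∘ₗ x) = (i ∘ₗ p) ∘ₗ x := by simp only [LinearMap.comp_assoc]
      _ = _ := by
        rw [rc0]
        simp only [LinearMap.sub_comp, LinearMap.id_comp, LinearMap.comp_assoc]
  have rcD : ∀ x : D →ₗ[R] D,
      i ∘ₗ (p ∘ₗ x) = x - dD ∘ₗ (h ∘ₗ x) - h ∘ₗ (dD ∘ₗ x) := by
    intro x
    calc i ∘ₗ (p ∘ₗ x) = (i ∘ₗ p) ∘ₗ x := by simp only [LinearMap.comp_assoc]
      _ = _ := by
        rw [rc0]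
        simp only [LinearMap.sub_comp, LinearMap.id_comp, LinearMap.comp_assoc]
  have rdC : ∀ x : C →ₗ[R] D, B ∘ₗ (h ∘ₗ (A ∘ₗ x)) = B ∘ₗ x - A ∘ₗ x := by
    intro x
    calc B ∘ₗ (h ∘ₗ (A ∘ₗ x)) = (B ∘ₗ (h ∘ₗ A)) ∘ₗ x := by
          simp only [LinearMap.comp_assoc]
      _ = _ := by rw [F2, LinearMap.sub_comp]
  have rdD : ∀ x : D →ₗ[R] D, B ∘ₗ (h ∘ₗ (A ∘ₗ x)) = B ∘ₗ x - A ∘ₗ x := by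
    intro x
    calc B ∘ₗ (h ∘ₗ (A ∘ₗ x)) = (B ∘ₗ (h ∘ₗ A)) ∘ₗ x := by
          simp only [LinearMap.comp_assoc]
      _ = _ := by rw [F2, LinearMap.sub_comp]
  have reC : ∀ x : C →ₗ[R] D, A ∘ₗ (h ∘ₗ (B ∘ₗ x)) = B ∘ₗ x - A ∘ₗ x := by
    intro x
    calc A ∘ₗ (h ∘ₗ (B ∘ₗ x)) = (A ∘ₗ (h ∘ₗ B)) ∘ₗ x := by
          simp only [LinearMap.comp_assoc]
      _ = _ := by rw [F3, LinearMap.sub_comp]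
  have reD : ∀ x : D →ₗ[R] D, A ∘ₗ (h ∘ₗ (B ∘ₗ x)) = B ∘ₗ x - A ∘ₗ x := by
    intro x
    calc A ∘ₗ (h ∘ₗ (B ∘ₗ x)) = (A ∘ₗ (h ∘ₗ B)) ∘ₗ x := by
          simp only [LinearMap.comp_assoc]
      _ = _ := by rw [F3, LinearMap.sub_comp]
  have rfC : ∀ x : C →ₗ[R] D,
      A ∘ₗ (A ∘ₗ x) = A ∘ₗ (dD ∘ₗ (h ∘ₗ (A ∘ₗ x))) + A ∘ₗ (h ∘ₗ (dD ∘ₗ (A ∘ₗ x)))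
        - dD ∘ₗ (A ∘ₗ x) - A ∘ₗ (dD ∘ₗ x) := by
    intro x
    calc A ∘ₗ (A ∘ₗ x) = (A ∘ₗ A) ∘ₗ x := by simp only [LinearMap.comp_assoc]
      _ = _ := by
        rw [hAA]
        simp only [LinearMap.sub_comp, LinearMap.add_comp, LinearMap.comp_assoc]
  have rfD : ∀ x : D →ₗ[R] D,
      A ∘ₗ (A ∘ₗ x) = A ∘ₗ (dD ∘ₗ (h ∘ₗ (A ∘ₗ x))) + A ∘ₗ (h ∘ₗ (dD ∘ₗ (A ∘ₗ x)))
        - dD ∘ₗ (A ∘ₗ x) - A ∘ₗ (dD ∘ₗ x) := by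
    intro x
    calc A ∘ₗ (A ∘ₗ x) = (A ∘ₗ A) ∘ₗ x := by simp only [LinearMap.comp_assoc]
      _ = _ := by
        rw [hAA]
        simp only [LinearMap.sub_comp, LinearMap.add_comp, LinearMap.comp_assoc]
  refine ⟨?_, ?_, ?_, ?_⟩
  · -- d̂² = 0
    simp only [LinearMap.add_comp, LinearMap.comp_add, LinearMap.sub_comp,
      LinearMap.comp_sub, LinearMap.comp_assoc, hdC, hp, a0, rbC, rbD, rcC, rcD,
      rdC, rdD, reC, reD, rfC, rfD, rc0, F2, F3,
      LinearMap.id_comp, LinearMap.comp_id, LinearMap.zero_comp,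
      LinearMap.comp_zero, zero_add, add_zero]
    abel
  · simp only [LinearMap.add_comp, LinearMap.comp_add, LinearMap.sub_comp,
      LinearMap.comp_sub, LinearMap.comp_assoc, hdC, hp, a0, rbC, rbD, rcC, rcD,
      rdC, rdD, reC, reD, rfC, rfD, rc0, F2, F3,
      LinearMap.id_comp, LinearMap.comp_id, LinearMap.zero_comp,
      LinearMap.comp_zero, zero_add, add_zero]
    abel
  · simp only [LinearMap.add_comp, LinearMap.comp_add, LinearMap.sub_comp,
      LinearMap.comp_sub, LinearMap.comp_assoc, hdC, hp, a0, rbC, rbD, rcC, rcD,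
      rdC, rdD, reC, reD, rfC, rfD, rc0, F2, F3,
      LinearMap.id_comp, LinearMap.comp_id, LinearMap.zero_comp,
      LinearMap.comp_zero, zero_add, add_zero]
    abel
  · simp only [LinearMap.add_comp, LinearMap.comp_add, LinearMap.sub_comp,
      LinearMap.comp_sub, LinearMap.comp_assoc, hdC, hp, a0, rbC, rbD, rcC, rcD,
      rdC, rdD, reC, reD, rfC, rfD, rc0, F2, F3,
      LinearMap.id_comp, LinearMap.comp_id, LinearMap.zero_comp,
      LinearMap.comp_zero, zero_add, add_zero]
    abel
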